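/- Let G ∉ 𝒢 be a minimal brace, let e = b₀w be a strictly thin edge of G of index one with cubic end b₀, and suppose the simple brace H = Ĝ−e (the retract of G − e) is not minimal. Then for every superfluous edge f of H, the graph G − e has a cubic outer vertex that is an end of f, and the other end of f is noncubic. -/

import Mathlib

/-!
Take the bipartition `(A, B)` of `G` with `b₀ ∈ B`, and write `f' = ab` with `a ∈ A`. By
minimality `G - ab` is not a brace; it is still matching covered (Hall's condition, using that a
brace has minimum degree three), so it has a nontrivial tight cut, that is, sets `SA ⊆ A` and
`SB ⊆ B` with `|SA| + |SB| + 1 = |A|` and no edge between them. As `G` is a brace, `a ∈ SA` and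
`b ∈ SB`. The retract `H` identifies `b₀` with its two neighbours `v₁, v₂` in `G - e`, and
`H - f` is a brace, so a set avoiding `{b₀, v₁, v₂}` has two more neighbours than elements unless
it is nearly a whole colour class. Applied to `SA` and to `SB` this gives `b₀ ∉ SB` and
`SA = {a}`, so `a` is cubic. If `a` were neither `v₁` nor `v₂`, both would be neighbours of `SB`,
and their identification would leave `SB` too few neighbours in `H - f`; so `a` is outer. If `b`
were cubic, `b` would have degree three in `H` and two in the brace `H - f`.
-/

namespace MinimalBraces

open SimpleGraph

/-- The degree of a vertex, via the cardinality of its neighbor set. -/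
noncomputable def mdeg {V : Type*} (G : SimpleGraph V) (v : V) : ℕ :=
  (G.neighborSet v).ncard

/-- `G` has a perfect matching. -/
def HasPerfectMatching {V : Type*} (G : SimpleGraph V) : Prop :=
  ∃ M : G.Subgraph, M.IsPerfectMatching

/-- A connected graph with at least one edge is matching covered if every edge
lies in some perfect matching. -/
def IsMatchingCovered {V : Type*} (G : SimpleGraph V) : Prop :=
  G.Connected ∧ G.edgeSet.Nonempty ∧
    ∀ e ∈ G.edgeSet, ∃ M : G.Subgraph, M.IsPerfectMatching ∧ e ∈ M.edgeSet

/-- `A`, `B` are the color classes of a bipartition of `G`. -/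
def IsBipartition {V : Type*} (G : SimpleGraph V) (A B : Set V) : Prop :=
  A ∪ B = Set.univ ∧ A ∩ B = ∅ ∧
    ∀ u v : V, G.Adj u v → (u ∈ A ∧ v ∈ B) ∨ (u ∈ B ∧ v ∈ A)

/-- `G` is bipartite (admits a bipartition into two color classes). -/
def IsBipartite' {V : Type*} (G : SimpleGraph V) : Prop :=
  ∃ A B : Set V, IsBipartition G A B

/-- The cut `∂(X)`: the set of edges of `G` with exactly one end in `X`. -/
def cutEdges {V : Type*} (G : SimpleGraph V) (X : Set V) : Set (Sym2 V) :=
  {e | e ∈ G.edgeSet ∧ ∃ u v : V, e = s(u, v) ∧ u ∈ X ∧ v ∉ X}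

/-- The cut `∂(X)` is tight: every perfect matching has exactly one edge in it. -/
def IsTightCut {V : Type*} (G : SimpleGraph V) (X : Set V) : Prop :=
  ∀ M : G.Subgraph, M.IsPerfectMatching → (M.edgeSet ∩ cutEdges G X).ncard = 1

/-- A shore is trivial if it or its complement is a singleton. -/
def IsTrivialShore {V : Type*} (X : Set V) : Prop :=
  (∃ v, X = ({v} : Set V)) ∨ (∃ v, Xᶜ = ({v} : Set V))

/-- A brace: a bipartite matching covered graph free of nontrivial tight cuts. -/
def IsBrace {V : Type*} (G : SimpleGraph V) : Prop :=
  IsBipartite' G ∧ IsMatchingCovered G ∧ ∀ X : Set V, IsTightCut G X → IsTrivialShore X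

/-- A minimal brace: deleting any edge results in a graph that is not a brace. -/
def IsMinimalBrace {V : Type*} (G : SimpleGraph V) : Prop :=
  IsBrace G ∧ ∀ e ∈ G.edgeSet, ¬ IsBrace (G.deleteEdges {e})

/-- The neighborhood of a set of vertices. -/
def setNbhd {V : Type*} (G : SimpleGraph V) (Z : Set V) : Set V :=
  {v | ∃ z ∈ Z, G.Adj z v}

/-- An edge of a (simple) brace is superfluous if deleting it leaves a brace. -/
def IsSuperfluous {V : Type*} (G : SimpleGraph V) (e : Sym2 V) : Prop :=
  e ∈ G.edgeSet ∧ IsBrace (G.deleteEdges {e})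

/-- A set of edges of `G` forming a matching. -/
def IsMatchingSet {V : Type*} (G : SimpleGraph V) (M : Set (Sym2 V)) : Prop :=
  M ⊆ G.edgeSet ∧ ∀ e₁ ∈ M, ∀ e₂ ∈ M, e₁ ≠ e₂ → ∀ v : V, ¬ (v ∈ e₁ ∧ v ∈ e₂)

/-- `G` is 2-extendable: it has a matching of size two, and every matching of
size two extends to a perfect matching. -/
def IsTwoExtendable {V : Type*} (G : SimpleGraph V) : Prop :=
  (∃ M : Set (Sym2 V), IsMatchingSet G M ∧ M.ncard = 2) ∧
  ∀ M : Set (Sym2 V), IsMatchingSet G M → M.ncard = 2 →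
    ∃ N : G.Subgraph, N.IsPerfectMatching ∧ M ⊆ N.edgeSet

/-- `G` is 3-connected: more than three vertices, and removing any at most two
vertices leaves a connected graph. -/
def IsThreeConnected {V : Type*} [Fintype V] (G : SimpleGraph V) : Prop :=
  4 ≤ Fintype.card V ∧ ∀ S : Set V, S.ncard ≤ 2 → (G.induce Sᶜ).Connected

/-! ### Retracts (bicontraction of all degree-two vertices) -/

/-- `f : V → W` realizes `H` as the retract of `G`: the fibers of `f` are exactly
the closed neighborhoods of the degree-two vertices of `G` (and singletons
otherwise), and adjacency in `H` is induced by `G`. -/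
def IsRetractMap {V W : Type*} (G : SimpleGraph V) (H : SimpleGraph W) (f : V → W) : Prop :=
  Function.Surjective f ∧
  (∀ u v : V, f u = f v ↔ (u = v ∨ ∃ v₀ : V, mdeg G v₀ = 2 ∧
      u ∈ insert v₀ (G.neighborSet v₀) ∧ v ∈ insert v₀ (G.neighborSet v₀))) ∧
  (∀ x y : W, H.Adj x y ↔ (x ≠ y ∧ ∃ u v : V, G.Adj u v ∧ f u = x ∧ f v = y))

/-- The retract obtained via `f` is a simple graph, i.e. no two distinct edges of `G`
become parallel after the bicontractions. -/
def RetractMapSimple {V W : Type*} (G : SimpleGraph V) (f : V → W) : Prop :=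
  ∀ e₁ ∈ G.edgeSet, ∀ e₂ ∈ G.edgeSet,
    Sym2.map f e₁ = Sym2.map f e₂ → ¬ (Sym2.map f e₁).IsDiag → e₁ = e₂

/-- An edge `e` of a brace `G` is thin if the retract of `G − e` is also a brace. -/
def IsThinEdge {V : Type*} (G : SimpleGraph V) (e : Sym2 V) : Prop :=
  e ∈ G.edgeSet ∧ ∃ (sH : Set V) (H : SimpleGraph sH) (f : V → sH),
    IsRetractMap (G.deleteEdges {e}) H f ∧ IsBrace H

/-- `e` is a strictly thin edge of `G`, with retract `H` realized by the map `f`: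
the retract of `G − e` is a brace and is simple. -/
def IsStrictlyThinVia {V W : Type*} (G : SimpleGraph V) (e : Sym2 V)
    (H : SimpleGraph W) (f : V → W) : Prop :=
  e ∈ G.edgeSet ∧ IsRetractMap (G.deleteEdges {e}) H f ∧ IsBrace H ∧
    RetractMapSimple (G.deleteEdges {e}) f

/-- `e` is a strictly thin edge of the simple brace `G`. -/
def IsStrictlyThinEdge {V : Type*} (G : SimpleGraph V) (e : Sym2 V) : Prop :=
  ∃ (sH : Set V) (H : SimpleGraph sH) (f : V → sH), IsStrictlyThinVia G e H f

/-- The index of a (strictly thin) edge `e`, computed from `G' = G − e`: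
the number of vertices of degree two in `G'`. -/
noncomputable def thinIndex {V : Type*} (G' : SimpleGraph V) : ℕ :=
  {v : V | mdeg G' v = 2}.ncard

/-- An inner vertex of `G' = G − e`: a vertex of degree two. -/
def IsInnerVertex {V : Type*} (G' : SimpleGraph V) (v : V) : Prop := mdeg G' v = 2

/-- An outer vertex of `G' = G − e`: a neighbor of an inner vertex. -/
def IsOuterVertex {V : Type*} (G' : SimpleGraph V) (v : V) : Prop :=
  ∃ u : V, IsInnerVertex G' u ∧ G'.Adj u v

/-- `(e, F)` is a minimality-preserving pair of the minimal brace `G`, where the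
retract `H` of `G − e` is realized by `f`: the edge `e` is strictly thin and
`H − F` is a minimal brace. -/
def IsMPPVia {V W : Type*} (G : SimpleGraph V) (H : SimpleGraph W) (f : V → W)
    (e : Sym2 V) (F : Set (Sym2 W)) : Prop :=
  IsMinimalBrace G ∧ IsStrictlyThinVia G e H f ∧ F ⊆ H.edgeSet ∧
    IsMinimalBrace (H.deleteEdges F)

/-! ### Stable extensions -/

/-- The `S`-extension of `J` with respect to `S = {a₁, a₂, b₁, b₂}`:
two new vertices `a₀ = inr 0` and `b₀ = inr 1` and five new edges
`a₀b₁, a₀b₂, b₀a₁, b₀a₂, a₀b₀`. -/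
def stableExtGraph {U : Type*} (J : SimpleGraph U) (a₁ a₂ b₁ b₂ : U) :
    SimpleGraph (U ⊕ Fin 2) :=
  SimpleGraph.fromRel (fun x y =>
    match x, y with
    | Sum.inl u, Sum.inl v => J.Adj u v
    | Sum.inl u, Sum.inr k => (k = 0 ∧ (u = b₁ ∨ u = b₂)) ∨ (k = 1 ∧ (u = a₁ ∨ u = a₂))
    | Sum.inr j, Sum.inr k => j ≠ k
    | Sum.inr _, Sum.inl _ => False)

/-- `G` is (isomorphic to) a stable-extension of the connected bipartite graph `J`,
with respect to some stable set meeting each color class in exactly two vertices. -/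
def IsStableExtensionOf {V U : Type*} (G : SimpleGraph V) (J : SimpleGraph U) : Prop :=
  ∃ (A B : Set U) (a₁ a₂ b₁ b₂ : U), J.Connected ∧ IsBipartition J A B ∧
    a₁ ∈ A ∧ a₂ ∈ A ∧ b₁ ∈ B ∧ b₂ ∈ B ∧ a₁ ≠ a₂ ∧ b₁ ≠ b₂ ∧
    ¬ J.Adj a₁ b₁ ∧ ¬ J.Adj a₁ b₂ ∧ ¬ J.Adj a₂ b₁ ∧ ¬ J.Adj a₂ b₂ ∧
    Nonempty (G ≃g stableExtGraph J a₁ a₂ b₁ b₂)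

/-! ### Concrete families of graphs -/

/-- The complete graph on two vertices. -/
def K2graph : SimpleGraph (Fin 2) := ⊤

/-- The cycle graph `Cₙ` on `ZMod n`. -/
def cycleGraph (n : ℕ) : SimpleGraph (ZMod n) :=
  SimpleGraph.fromRel (fun x y => x - y = 1)

/-- The Möbius ladder `M_{2m}`: the cycle `C_{2m}` plus the long chords. -/
def mobiusLadder (m : ℕ) : SimpleGraph (ZMod (2 * m)) :=
  SimpleGraph.fromRel (fun x y => x - y = 1 ∨ x - y = (m : ZMod (2 * m)))

/-- The prism (ladder) over the cycle `Cₘ`. -/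
def prismGraph (m : ℕ) : SimpleGraph (ZMod m × Bool) :=
  SimpleGraph.fromRel (fun p q => (p.2 = q.2 ∧ p.1 - q.1 = 1) ∨ (p.1 = q.1 ∧ p.2 ≠ q.2))

/-- The biwheel `B_{2m+2}`: the cycle `C_{2m}` plus two nonadjacent hubs, one joined to
all even rim vertices, the other to all odd rim vertices. `B_{2n} = biwheel (n-1)`. -/
def biwheel (m : ℕ) : SimpleGraph (ZMod (2 * m) ⊕ Fin 2) :=
  SimpleGraph.fromRel (fun x y =>
    match x, y with
    | Sum.inl a, Sum.inl b => a - b = 1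
    | Sum.inl a, Sum.inr k => (k = 0 ∧ Even a) ∨ (k = 1 ∧ ¬ Even a)
    | Sum.inr _, _ => False)

/-- The complete bipartite graph `K_{3,3}`. -/
def K33graph : SimpleGraph (Fin 3 ⊕ Fin 3) := completeBipartiteGraph (Fin 3) (Fin 3)

/-- The family `𝒢` : `K₂`, `C₄` and the McCuaig braces
(prisms, Möbius ladders and biwheels). -/
def InMcCuaigFamily {V : Type*} (G : SimpleGraph V) : Prop :=
  Nonempty (G ≃g K2graph) ∨ Nonempty (G ≃g cycleGraph 4) ∨
  (∃ m : ℕ, 3 ≤ m ∧ Nonempty (G ≃g prismGraph m)) ∨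
  (∃ m : ℕ, 3 ≤ m ∧ Nonempty (G ≃g mobiusLadder m)) ∨
  (∃ m : ℕ, 3 ≤ m ∧ Nonempty (G ≃g biwheel m))

/-- The graph `Q_{2n}` (for `n ≥ 5`): color classes `{0, …, n-1}` on each side; the
hubs `0, 1` of each side are joined to all vertices `2, …, n-1` of the other side,
and the vertices `2, …, n-1` form a perfect matching between the two sides.
`Qgraph 5 = Q₁₀`, `Qgraph 6 = Q₁₂`, and `Qgraph n = Q_{2n}` of the family `𝒬` for `n ≥ 6`. -/
def Qgraph (n : ℕ) : SimpleGraph (Fin n ⊕ Fin n) :=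
  SimpleGraph.fromRel (fun x y =>
    match x, y with
    | Sum.inl i, Sum.inr j =>
        ((i : ℕ) < 2 ∧ 2 ≤ (j : ℕ)) ∨ ((j : ℕ) < 2 ∧ 2 ≤ (i : ℕ)) ∨
          ((i : ℕ) = (j : ℕ) ∧ 2 ≤ (i : ℕ))
    | _, _ => False)

/-- `Q₁₀⁺`: the graph `Q₁₀` plus an edge joining two noncubic vertices that lie in
distinct color classes (and in distinct `K_{3,3}`-pieces of the tight cut
decomposition of `Q₁₀`). -/
def Q10plus : SimpleGraph (Fin 5 ⊕ Fin 5) :=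
  Qgraph 5 ⊔ SimpleGraph.fromEdgeSet {s((Sum.inl 0 : Fin 5 ⊕ Fin 5), (Sum.inr 0 : Fin 5 ⊕ Fin 5))}

/-- The bipartite complement of `G` with respect to the color classes `A`, `B`. -/
def bipComplement {V : Type*} (G : SimpleGraph V) (A B : Set V) : SimpleGraph V :=
  SimpleGraph.fromRel (fun u v => u ∈ A ∧ v ∈ B ∧ ¬ G.Adj u v)

/-! ### Bi-splitting and expansion operations -/

/-- `G` is obtained from `H` by bi-splitting the noncubic vertex `b` into `b₁ a₀ b₂`,
as witnessed by the projection `f : W → V` (which sends `b₁, a₀, b₂` to `b` and is a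
bijection elsewhere). The edges of `H` at `b` are distributed between `b₁` and `b₂`,
each receiving at least two, and `a₀` is a new vertex adjacent precisely to `b₁, b₂`. -/
def IsBisplitMap {V W : Type*} (H : SimpleGraph V) (b : V) (G : SimpleGraph W)
    (b₁ a₀ b₂ : W) (f : W → V) : Prop :=
  4 ≤ mdeg H b ∧
  Function.Surjective f ∧ f b₁ = b ∧ f a₀ = b ∧ f b₂ = b ∧
  b₁ ≠ b₂ ∧ a₀ ≠ b₁ ∧ a₀ ≠ b₂ ∧
  (∀ u v : W, f u = f v → u = v ∨
      (u ∈ ({b₁, a₀, b₂} : Set W) ∧ v ∈ ({b₁, a₀, b₂} : Set W))) ∧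
  G.neighborSet a₀ = {b₁, b₂} ∧
  3 ≤ mdeg G b₁ ∧ 3 ≤ mdeg G b₂ ∧ ¬ G.Adj b₁ b₂ ∧
  (∀ x : W, x ≠ a₀ → ¬ (G.Adj b₁ x ∧ G.Adj b₂ x)) ∧
  (∀ x y : V, H.Adj x y ↔ (x ≠ y ∧ ∃ u v : W, G.Adj u v ∧ f u = x ∧ f v = y))

/-- Expansion of index zero: adding an edge joining two nonadjacent vertices in
distinct color classes. -/
def ExpansionZero {W V : Type*} (G : SimpleGraph W) (H : SimpleGraph V) : Prop :=
  ∃ (A B : Set V) (a b : V), IsBipartition H A B ∧ a ∈ A ∧ b ∈ B ∧ ¬ H.Adj a b ∧ a ≠ b ∧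
    Nonempty (G ≃g (H ⊔ SimpleGraph.fromEdgeSet {s(a, b)}))

/-- Expansion of index one: `G = H{a → a₁b₀a₂} + b₀w`, where `a, w` are in the same
color class of `H` and `a` is noncubic. -/
def ExpansionOne {W V : Type*} (G : SimpleGraph W) (H : SimpleGraph V) : Prop :=
  ∃ (A B : Set V) (a w : V), IsBipartition H A B ∧
    ((a ∈ A ∧ w ∈ A) ∨ (a ∈ B ∧ w ∈ B)) ∧ a ≠ w ∧ 4 ≤ mdeg H a ∧
    ∃ (G₁ : SimpleGraph W) (a₁ b₀ a₂ : W) (f : W → V) (w' : W),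
      IsBisplitMap H a G₁ a₁ b₀ a₂ f ∧ f w' = w ∧
      G = G₁ ⊔ SimpleGraph.fromEdgeSet {s(b₀, w')}

/-- Expansion of index two: `G = H{a → a₁b₀a₂}{b → b₁a₀b₂} + a₀b₀`, where `a, b` are
noncubic vertices of `H` in distinct color classes. -/
def ExpansionTwo {W V : Type*} (G : SimpleGraph W) (H : SimpleGraph V) : Prop :=
  ∃ (A B : Set V) (a b : V), IsBipartition H A B ∧ a ∈ A ∧ b ∈ B ∧
    4 ≤ mdeg H a ∧ 4 ≤ mdeg H b ∧
    ∃ (sm : Set W) (G₁ : SimpleGraph sm) (a₁ b₀ a₂ : sm) (g : sm → V),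
      IsBisplitMap H a G₁ a₁ b₀ a₂ g ∧
      ∃ (b' : sm) (G₂ : SimpleGraph W) (b₁ a₀ b₂ : W) (f : W → sm) (b₀' : W),
        g b' = b ∧ IsBisplitMap G₁ b' G₂ b₁ a₀ b₂ f ∧ f b₀' = b₀ ∧
        G = G₂ ⊔ SimpleGraph.fromEdgeSet {s(a₀, b₀')}

/-- `G` is obtained from `H` by an expansion operation (of index zero, one or two). -/
def IsExpansionOf {W V : Type*} (G : SimpleGraph W) (H : SimpleGraph V) : Prop :=
  ExpansionZero G H ∨ ExpansionOne G H ∨ ExpansionTwo G H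

/-! ### Narrow minimality-preserving pairs -/

/-- The properties of `F` (viewed in `G − e` via the retract map `fm`) required by the
Main Theorem: (i) if `index(e) = 1` then some outer vertex `v` has `F ⊆ ∂(v)`;
(ii) if `index(e) = 2` then some adjacent outer vertices `u, w` have `F ⊆ ∂({u,w})`;
(iii) for each `f ∈ F`, an end of `f` is cubic iff it is an outer vertex. -/
def NarrowProps {V W : Type*} (G : SimpleGraph V) (fm : V → W) (e : Sym2 V)
    (F : Set (Sym2 W)) : Prop :=
  (thinIndex (G.deleteEdges {e}) = 1 →
      ∃ v : V, IsOuterVertex (G.deleteEdges {e}) v ∧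
        ∀ g ∈ (G.deleteEdges {e}).edgeSet, Sym2.map fm g ∈ F → v ∈ g) ∧
  (thinIndex (G.deleteEdges {e}) = 2 →
      ∃ u w : V, IsOuterVertex (G.deleteEdges {e}) u ∧ IsOuterVertex (G.deleteEdges {e}) w ∧
        (G.deleteEdges {e}).Adj u w ∧
        ∀ g ∈ (G.deleteEdges {e}).edgeSet, Sym2.map fm g ∈ F →
          ((u ∈ g ∧ w ∉ g) ∨ (w ∈ g ∧ u ∉ g))) ∧
  (∀ g ∈ (G.deleteEdges {e}).edgeSet, Sym2.map fm g ∈ F →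
      ∀ x : V, x ∈ g → (mdeg G x = 3 ↔ IsOuterVertex (G.deleteEdges {e}) x))

/-- A narrow minimality-preserving pair, as in the Main Theorem. -/
def IsNarrowMPP {V W : Type*} (G : SimpleGraph V) (H : SimpleGraph W) (fm : V → W)
    (e : Sym2 V) (F : Set (Sym2 W)) : Prop :=
  IsMPPVia G H fm e F ∧
  (F = ∅ ∨ NarrowProps G fm e F) ∧
  F.ncard ≤ thinIndex (G.deleteEdges {e}) + 1 ∧
  (thinIndex (G.deleteEdges {e}) = 1 ∧ F.ncard = 2 →
    IsStableExtensionOf G (H.deleteEdges F))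

section Neighbourhoods

variable {V : Type*} {G : SimpleGraph V} {S : Set V}

lemma setNbhd_singleton (y : V) : setNbhd G {y} = G.neighborSet y := by
  ext z
  simp [setNbhd]

lemma setNbhd_mono {S' : Set V} (h : S ⊆ S') : setNbhd G S ⊆ setNbhd G S' := by
  rintro v ⟨z, hz, hadj⟩
  exact ⟨z, h hz, hadj⟩

lemma neighborSet_deleteEdges_mk (G : SimpleGraph V) (x y : V) :
    (G.deleteEdges {s(x, y)}).neighborSet x = G.neighborSet x \ {y} := by
  ext z
  simpa using fun h _ _ => h.ne'

lemma neighborSet_deleteEdges_of_ne {x y z : V} (hx : z ≠ x) (hy : z ≠ y) :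
    (G.deleteEdges {s(x, y)}).neighborSet z = G.neighborSet z := by
  ext v
  simp [hx, hy]

lemma mdeg_deleteEdges_mk [Finite V] {x y : V} (h : G.Adj x y) :
    mdeg (G.deleteEdges {s(x, y)}) x + 1 = mdeg G x := by
  unfold mdeg
  have hy : y ∈ G.neighborSet x := h
  rw [neighborSet_deleteEdges_mk, Set.ncard_sdiff_singleton_of_mem hy]
  have := (Set.ncard_pos (Set.toFinite _)).mpr ⟨y, hy⟩
  omega

lemma mdeg_deleteEdges_of_ne {x y z : V} (hx : z ≠ x) (hy : z ≠ y) :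
    mdeg (G.deleteEdges {s(x, y)}) z = mdeg G z := by
  rw [mdeg, neighborSet_deleteEdges_of_ne hx hy, mdeg]

end Neighbourhoods

section Bipartition

variable {V : Type*} {G : SimpleGraph V} {A B : Set V} {S : Set V}

lemma IsBipartition.symm (h : IsBipartition G A B) : IsBipartition G B A :=
  ⟨by rw [Set.union_comm, h.1], by rw [Set.inter_comm, h.2.1],
    fun u v huv => (h.2.2 u v huv).symm⟩

lemma IsBipartition.notMem_right (h : IsBipartition G A B) {u : V} (hu : u ∈ A) : u ∉ B :=
  fun hB => Set.eq_empty_iff_forall_notMem.mp h.2.1 u ⟨hu, hB⟩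

lemma IsBipartition.ne_of_mem (h : IsBipartition G A B) {u v : V} (hu : u ∈ A) (hv : v ∈ B) :
    u ≠ v :=
  fun huv => h.notMem_right hu (huv ▸ hv)

lemma IsBipartition.mem_right_of_adj (h : IsBipartition G A B) {u v : V} (hu : u ∈ A)
    (huv : G.Adj u v) : v ∈ B :=
  (h.2.2 u v huv).elim And.right fun h' => absurd h'.1 (h.notMem_right hu)

lemma IsBipartition.mem_or_mem (h : IsBipartition G A B) (u : V) : u ∈ A ∨ u ∈ B :=
  (Set.ext_iff.mp h.1 u).mpr trivial

lemma IsBipartition.mono (h : IsBipartition G A B) {G' : SimpleGraph V} (hle : G' ≤ G) :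
    IsBipartition G' A B :=
  ⟨h.1, h.2.1, fun u v huv => h.2.2 u v (hle huv)⟩

lemma IsBipartition.setNbhd_subset (h : IsBipartition G A B) (hS : S ⊆ A) : setNbhd G S ⊆ B := by
  rintro v ⟨z, hz, hadj⟩
  exact h.mem_right_of_adj (hS hz) hadj

lemma IsBipartition.setNbhd_subset_insert_deleteEdges (h : IsBipartition G A B) (hS : S ⊆ A)
    {a : V} (ha : a ∈ A) (b : V) :
    setNbhd G S ⊆ insert b (setNbhd (G.deleteEdges {s(a, b)}) S) := by
  rintro y ⟨z, hz, hadj⟩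
  by_cases hzy : s(z, y) = s(a, b)
  · rcases Sym2.eq_iff.mp hzy with ⟨-, rfl⟩ | ⟨-, rfl⟩
    · exact Set.mem_insert _ _
    · exact absurd (h.mem_right_of_adj (hS hz) hadj) (h.notMem_right ha)
  · exact Or.inr ⟨z, hz, (G.deleteEdges_adj).mpr ⟨hadj, hzy⟩⟩

lemma IsBipartition.exists_eq_mk (hbip : IsBipartition G A B) {e : Sym2 V} (he : e ∈ G.edgeSet) :
    ∃ a b, e = s(a, b) ∧ a ∈ A ∧ b ∈ B := by
  induction e using Sym2.ind with
  | _ x y =>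
  rcases hbip.mem_or_mem x with hx | hx
  · exact ⟨x, y, rfl, hx, hbip.mem_right_of_adj hx he⟩
  · exact ⟨y, x, Sym2.eq_swap, hbip.symm.mem_right_of_adj hx he, hx⟩

end Bipartition

section PerfectMatching

variable {V : Type*} {G : SimpleGraph V} {M : G.Subgraph}

noncomputable def matchPartner (hM : M.IsPerfectMatching) (v : V) : V :=
  (hM.1 (hM.2 v)).choose

lemma matchPartner_adj (hM : M.IsPerfectMatching) (v : V) : M.Adj v (matchPartner hM v) :=
  (hM.1 (hM.2 v)).choose_spec.1

lemma matchPartner_eq_of_adj (hM : M.IsPerfectMatching) {v w : V} (h : M.Adj v w) :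
    matchPartner hM v = w :=
  ((hM.1 (hM.2 v)).choose_spec.2 w h).symm

lemma matchPartner_matchPartner (hM : M.IsPerfectMatching) (v : V) :
    matchPartner hM (matchPartner hM v) = v :=
  matchPartner_eq_of_adj hM (matchPartner_adj hM v).symm

lemma matchPartner_injective (hM : M.IsPerfectMatching) : Function.Injective (matchPartner hM) :=
  Function.LeftInverse.injective (matchPartner_matchPartner hM)

lemma adj_matchPartner (hM : M.IsPerfectMatching) (v : V) : G.Adj v (matchPartner hM v) :=
  M.adj_sub (matchPartner_adj hM v)

lemma matchPartner_image_subset_setNbhd (hM : M.IsPerfectMatching) (S : Set V) :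
    matchPartner hM '' S ⊆ setNbhd G S := by
  rintro _ ⟨s, hs, rfl⟩
  exact ⟨s, hs, adj_matchPartner hM s⟩

lemma ncard_image_matchPartner (hM : M.IsPerfectMatching) (S : Set V) :
    (matchPartner hM '' S).ncard = S.ncard :=
  (matchPartner_injective hM).injOn.ncard_image

lemma ncard_le_ncard_setNbhd [Finite V] (hM : M.IsPerfectMatching) (S : Set V) :
    S.ncard ≤ (setNbhd G S).ncard :=
  ncard_image_matchPartner hM S ▸
    Set.ncard_le_ncard (matchPartner_image_subset_setNbhd hM S) (Set.toFinite _)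

lemma IsBipartition.ncard_eq_ncard [Finite V] {A B : Set V} (h : IsBipartition G A B)
    (hM : M.IsPerfectMatching) :
    A.ncard = B.ncard := by
  have key : ∀ {A' B' : Set V}, IsBipartition G A' B' → A'.ncard ≤ B'.ncard := fun h' =>
    (ncard_le_ncard_setNbhd hM _).trans
      (Set.ncard_le_ncard (h'.setNbhd_subset subset_rfl) (Set.toFinite _))
  exact (key h).antisymm (key h.symm)

lemma even_ncard_of_matchPartner_mem [Finite V] (hM : M.IsPerfectMatching) {S : Set V}
    (hS : ∀ v ∈ S, matchPartner hM v ∈ S) : Even S.ncard := by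
  classical
  have hmatch : (M.induce S).IsMatching := by
    intro v hv
    refine ⟨matchPartner hM v, ⟨hv, hS v hv, matchPartner_adj hM v⟩, ?_⟩
    rintro w ⟨-, -, hvw⟩
    exact (matchPartner_eq_of_adj hM hvw).symm
  have : Fintype (M.induce S).verts := Fintype.ofFinite _
  simpa [Set.ncard_eq_toFinset_card'] using hmatch.even_card

lemma IsMatchingCovered.exists_isPerfectMatching (h : IsMatchingCovered G) :
    ∃ M : G.Subgraph, M.IsPerfectMatching := by
  obtain ⟨-, ⟨e, he⟩, hmc⟩ := h
  obtain ⟨M, hM, -⟩ := hmc e he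
  exact ⟨M, hM⟩

end PerfectMatching

section Surplus

variable {V : Type*} [Finite V] {G : SimpleGraph V} {A B S : Set V}

/-- If `|N(S)| ≤ |S|`, every perfect matching pairs `S` with `N(S)`, so no edge of a perfect
matching leaves `S ∪ N(S)`; connectivity provides such an edge unless `S = A`. -/
lemma IsMatchingCovered.ncard_setNbhd_ge_succ (h : IsMatchingCovered G)
    (hbip : IsBipartition G A B) (hSA : S ⊆ A) (hne : S.Nonempty) (hproper : S ≠ A) :
    S.ncard + 1 ≤ (setNbhd G S).ncard := by
  obtain ⟨hconn, -, hmc⟩ := h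
  by_contra! hlt
  have hclosed : ∀ (M : G.Subgraph) (hM : M.IsPerfectMatching),
      ∀ x ∈ S ∪ setNbhd G S, matchPartner hM x ∈ S ∪ setNbhd G S := by
    intro M hM
    have himg : matchPartner hM '' S = setNbhd G S :=
      Set.eq_of_subset_of_ncard_le (matchPartner_image_subset_setNbhd hM S)
        (by rw [ncard_image_matchPartner]; omega) (Set.toFinite _)
    rintro x (hx | hx)
    · exact Or.inr (himg ▸ Set.mem_image_of_mem _ hx)
    · obtain ⟨s, hs, rfl⟩ := himg.symm ▸ hx
      exact Or.inl ((matchPartner_matchPartner hM s).symm ▸ hs)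
  obtain ⟨x, hx⟩ := hne
  obtain ⟨y, hyA, hyS⟩ := Set.exists_of_ssubset (hSA.ssubset_of_ne hproper)
  have hy : y ∉ S ∪ setNbhd G S := by
    rintro (h | h)
    exacts [hyS h, hbip.notMem_right hyA (hbip.setNbhd_subset hSA h)]
  obtain ⟨p⟩ := hconn.preconnected x y
  obtain ⟨d, -, hd₁, hd₂⟩ := p.exists_boundary_dart _ (Or.inl hx) hy
  obtain ⟨M, hM, hdM⟩ := hmc s(d.fst, d.snd) d.adj
  exact hd₂ (matchPartner_eq_of_adj hM hdM ▸ hclosed M hM _ hd₁)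

/-- The vertex of `N(S)` not matched into `S` carries the only matching edge leaving
`S ∪ N(S)`. -/
lemma IsBipartition.isTightCut_union_setNbhd (hbip : IsBipartition G A B) (hSA : S ⊆ A)
    (hdef : (setNbhd G S).ncard = S.ncard + 1) : IsTightCut G (S ∪ setNbhd G S) := by
  intro M hM
  set p := matchPartner hM with hp
  have hNB := hbip.setNbhd_subset hSA
  obtain ⟨y₀, hy₀eq⟩ : ∃ y₀, setNbhd G S \ p '' S = {y₀} := by
    refine Set.ncard_eq_one.mp ?_
    rw [Set.ncard_sdiff (matchPartner_image_subset_setNbhd hM S), ncard_image_matchPartner, hdef]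
    omega
  have hy₀ : y₀ ∈ setNbhd G S \ p '' S := hy₀eq ▸ rfl
  have hmatched : ∀ y, p y ∈ S ↔ y ∈ p '' S := fun y =>
    ⟨fun h => ⟨p y, h, matchPartner_matchPartner hM y⟩,
      by rintro ⟨s, hs, rfl⟩; rwa [hp, matchPartner_matchPartner]⟩
  have hout : ∀ y ∈ setNbhd G S, p y ∉ setNbhd G S :=
    fun y hy h => hbip.notMem_right (hbip.symm.mem_right_of_adj (hNB hy) (adj_matchPartner hM y))
      (hNB h)
  suffices M.edgeSet ∩ cutEdges G (S ∪ setNbhd G S) = {s(y₀, p y₀)} by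
    rw [this, Set.ncard_singleton]
  refine Set.Subset.antisymm ?_ ?_
  · rintro _ ⟨huv, -, u, v, rfl, hu, hv⟩
    have hv' : v = p u := (matchPartner_eq_of_adj hM huv).symm
    subst hv'
    have huN : u ∈ setNbhd G S := hu.resolve_left fun h =>
      hv (Or.inr (matchPartner_image_subset_setNbhd hM S ⟨u, h, rfl⟩))
    have : u ∈ setNbhd G S \ p '' S := ⟨huN, fun h => hv (Or.inl ((hmatched u).mpr h))⟩
    rw [hy₀eq, Set.mem_singleton_iff] at this
    rw [this, Set.mem_singleton_iff]
  · rintro _ rfl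
    refine ⟨matchPartner_adj hM y₀, adj_matchPartner hM y₀, y₀, p y₀, rfl, Or.inr hy₀.1, ?_⟩
    rintro (h | h)
    exacts [hy₀.2 ((hmatched y₀).mp h), hout y₀ hy₀.1 h]

lemma IsBrace.ncard_setNbhd_ge_add_two (hbr : IsBrace G) (hbip : IsBipartition G A B)
    (hSA : S ⊆ A) (hne : S.Nonempty) (hsmall : S.ncard + 2 ≤ A.ncard) :
    S.ncard + 2 ≤ (setNbhd G S).ncard := by
  have hsucc := hbr.2.1.ncard_setNbhd_ge_succ hbip hSA hne (by rintro rfl; omega)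
  by_contra! hlt
  have hS := (Set.ncard_pos (Set.toFinite S)).mpr hne
  rcases hbr.2.2 _ (hbip.isTightCut_union_setNbhd hSA (by omega)) with ⟨v, hv⟩ | ⟨v, hv⟩
  · have := Set.ncard_le_ncard (hv ▸ Set.subset_union_right : setNbhd G S ⊆ {v})
    rw [Set.ncard_singleton] at this
    omega
  · have hsub : A \ S ⊆ {v} := hv ▸ fun x ⟨hxA, hxS⟩ h =>
      h.elim hxS fun hN => hbip.notMem_right hxA (hbip.setNbhd_subset hSA hN)
    have := Set.ncard_le_ncard hsub
    rw [Set.ncard_singleton, Set.ncard_sdiff hSA] at this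
    omega

lemma IsBrace.three_le_mdeg (hbr : IsBrace G) (hbip : IsBipartition G A B) (hA : 3 ≤ A.ncard)
    (y : V) : 3 ≤ mdeg G y := by
  obtain ⟨M, hM⟩ := hbr.2.1.exists_isPerfectMatching
  have hAB := hbip.ncard_eq_ncard hM
  rcases hbip.mem_or_mem y with hy | hy
  · simpa [mdeg, setNbhd_singleton] using hbr.ncard_setNbhd_ge_add_two hbip
      (Set.singleton_subset_iff.mpr hy) (Set.singleton_nonempty y) (by simp; omega)
  · simpa [mdeg, setNbhd_singleton] using hbr.ncard_setNbhd_ge_add_two hbip.symm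
      (Set.singleton_subset_iff.mpr hy) (Set.singleton_nonempty y) (by simp; omega)

lemma IsBrace.four_le_mdeg {x y : V} {P Q : Set V}
    (hK : IsBrace (G.deleteEdges {s(x, y)})) (hbip : IsBipartition (G.deleteEdges {s(x, y)}) P Q)
    (hx : x ∈ Q) (hxy : G.Adj x y) (hQ : 3 ≤ Q.ncard) : 4 ≤ mdeg G x := by
  have := hK.ncard_setNbhd_ge_add_two hbip.symm (Set.singleton_subset_iff.mpr hx)
    (Set.singleton_nonempty x) (by rw [Set.ncard_singleton]; omega)
  rw [Set.ncard_singleton, setNbhd_singleton] at this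
  have := mdeg_deleteEdges_mk hxy
  unfold mdeg at *
  omega

end Surplus

section DeleteEdge

variable {V : Type*} {G : SimpleGraph V} {A B : Set V}

lemma exists_isPerfectMatching_of_injOn [Finite V] (hbip : IsBipartition G A B)
    (hcard : A.ncard = B.ncard) {g : V → V} (hinj : Set.InjOn g A)
    (hadj : ∀ v ∈ A, G.Adj v (g v)) :
    ∃ M : G.Subgraph, M.IsPerfectMatching ∧ ∀ v ∈ A, M.Adj v (g v) := by
  have hgB : ∀ v ∈ A, g v ∈ B := fun v hv => hbip.mem_right_of_adj hv (hadj v hv)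
  have himg : g '' A = B :=
    Set.eq_of_subset_of_ncard_le (by rintro _ ⟨v, hv, rfl⟩; exact hgB v hv)
      (by rw [hinj.ncard_image, hcard]) (Set.toFinite _)
  let M : G.Subgraph :=
    { verts := Set.univ
      Adj := fun u v => (u ∈ A ∧ g u = v) ∨ (v ∈ A ∧ g v = u)
      adj_sub := by
        rintro u v (⟨hu, rfl⟩ | ⟨hv, rfl⟩)
        exacts [hadj u hu, (hadj v hv).symm]
      edge_vert := fun _ => Set.mem_univ _
      symm := ⟨fun _ _ h => h.symm⟩ }
  refine ⟨M, Subgraph.isPerfectMatching_iff.mpr fun v => ?_, fun v hv => Or.inl ⟨hv, rfl⟩⟩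
  rcases hbip.mem_or_mem v with hv | hv
  · refine ⟨g v, Or.inl ⟨hv, rfl⟩, ?_⟩
    rintro w (⟨-, rfl⟩ | ⟨hw, rfl⟩)
    exacts [rfl, absurd (hgB w hw) (hbip.notMem_right hv)]
  · obtain ⟨u, hu, rfl⟩ := himg.symm ▸ hv
    refine ⟨u, Or.inr ⟨hu, rfl⟩, ?_⟩
    rintro w (⟨hgu, -⟩ | ⟨hw, hgw⟩)
    exacts [absurd hv (hbip.notMem_right hgu), hinj hw hu hgw]

lemma exists_isPerfectMatching_mem_edgeSet [Fintype V] (hbip : IsBipartition G A B)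
    (hcard : A.ncard = B.ncard) {c d : V} (hcd : G.Adj c d) (hc : c ∈ A)
    (hall : ∀ S ⊆ A \ {c}, S.ncard ≤ (setNbhd G S \ {d}).ncard) :
    ∃ M : G.Subgraph, M.IsPerfectMatching ∧ s(c, d) ∈ M.edgeSet := by
  classical
  obtain ⟨F, hFinj, hF⟩ := (Fintype.all_card_le_filter_rel_iff_exists_injective
    (fun (i : ↥(A \ {c})) (v : V) => G.Adj i v ∧ v ≠ d)).mp fun s => by
      have h := hall (Subtype.val '' (s : Set ↥(A \ {c}))) (by rintro _ ⟨i, -, rfl⟩; exact i.2)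
      rw [Subtype.val_injective.injOn.ncard_image, Set.ncard_coe_finset] at h
      convert h using 1
      rw [← Set.ncard_coe_finset]
      congr 1
      ext v
      simp [setNbhd, ← and_assoc, exists_and_right]
  let g : V → V := fun v => if h : v ∈ A \ {c} then F ⟨v, h⟩ else d
  have hgc : g c = d := by simp [g]
  have hg : ∀ v (h : v ∈ A \ {c}), g v = F ⟨v, h⟩ := fun v h => dif_pos h
  have hinj : Set.InjOn g A := by
    intro u hu v hv huv
    by_cases hu' : u = c <;> by_cases hv' : v = c
    · rw [hu', hv']
    · rw [hu', hgc, hg v ⟨hv, hv'⟩] at huv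
      exact absurd huv.symm (hF _).2
    · rw [hv', hgc, hg u ⟨hu, hu'⟩] at huv
      exact absurd huv (hF _).2
    · rw [hg u ⟨hu, hu'⟩, hg v ⟨hv, hv'⟩] at huv
      exact congrArg Subtype.val (hFinj huv)
  have hadj : ∀ v ∈ A, G.Adj v (g v) := by
    intro v hv
    by_cases hv' : v = c
    · rwa [hv', hgc]
    · rw [hg v ⟨hv, hv'⟩]
      exact (hF ⟨v, hv, hv'⟩).1
  obtain ⟨M, hM, hMg⟩ := exists_isPerfectMatching_of_injOn hbip hcard hinj hadj
  exact ⟨M, hM, hgc ▸ hMg c hc⟩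

/-- Every vertex of `B` has at least three neighbours, so one of them avoids both `c` and `a`. -/
lemma IsBrace.subset_setNbhd_deleteEdges_sdiff [Finite V] (hbr : IsBrace G)
    (hbip : IsBipartition G A B) (hA : 3 ≤ A.ncard) {a : V} (ha : a ∈ A) (b c : V) :
    B ⊆ setNbhd (G.deleteEdges {s(a, b)}) (A \ {c}) := by
  intro y hyB
  obtain ⟨z, hzy, hz⟩ : (G.neighborSet y \ {c, a}).Nonempty := by
    rw [← Set.ncard_pos]
    have h₁ := Set.ncard_le_ncard_sdiff_add_ncard (G.neighborSet y) {c, a}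
    have h₂ : ({c, a} : Set V).ncard ≤ 2 := (Set.ncard_insert_le c {a}).trans (by simp)
    have := hbr.three_le_mdeg hbip hA y
    unfold mdeg at this
    omega
  simp only [Set.mem_insert_iff, Set.mem_singleton_iff, not_or] at hz
  refine ⟨z, ⟨hbip.symm.mem_right_of_adj hyB hzy, hz.1⟩,
    (G.deleteEdges_adj).mpr ⟨hzy.symm, fun h => ?_⟩⟩
  rcases Sym2.eq_iff.mp h with ⟨h₁, -⟩ | ⟨-, h₂⟩
  exacts [hz.2 h₁, hbip.ne_of_mem ha hyB h₂.symm]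

/-- Hall's condition for a perfect matching of `G - ab` through the edge `cd`: small sets keep
the surplus of the brace up to the loss of `b` and `d`, and `A \ {c}` sees all of `B`. -/
lemma IsBrace.hall_deleteEdges [Finite V] (hbr : IsBrace G) (hbip : IsBipartition G A B)
    (hA : 3 ≤ A.ncard) {a b c d : V} (ha : a ∈ A) (hc : c ∈ A) (hd : d ∈ B) :
    ∀ S ⊆ A \ {c}, S.ncard ≤ (setNbhd (G.deleteEdges {s(a, b)}) S \ {d}).ncard := by
  intro S hS
  rcases S.eq_empty_or_nonempty with rfl | hne
  · simp
  have hSA : S ⊆ A := hS.trans Set.sdiff_subset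
  obtain ⟨M, hM⟩ := hbr.2.1.exists_isPerfectMatching
  have hAB := hbip.ncard_eq_ncard hM
  have hcA : (A \ {c}).ncard = A.ncard - 1 := Set.ncard_sdiff_singleton_of_mem hc
  set N := setNbhd (G.deleteEdges {s(a, b)}) S
  by_cases hsmall : S.ncard + 2 ≤ A.ncard
  · have hsub : setNbhd G S ⊆ insert d (insert b (N \ {d})) := fun y hy => by
      rcases hbip.setNbhd_subset_insert_deleteEdges hSA ha b hy with rfl | h
      · exact Or.inr (Or.inl rfl)
      · by_cases hyd : y = d
        exacts [Or.inl hyd, Or.inr (Or.inr ⟨h, hyd⟩)]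
    have h₁ := Set.ncard_le_ncard hsub
    have h₂ := Set.ncard_insert_le d (insert b (N \ {d}))
    have h₃ := Set.ncard_insert_le b (N \ {d})
    have := hbr.ncard_setNbhd_ge_add_two hbip hSA hne hsmall
    omega
  · have hSeq : S = A \ {c} := Set.eq_of_subset_of_ncard_le hS (by omega) (Set.toFinite _)
    have hBN : B ⊆ N := by
      simpa only [N, hSeq] using hbr.subset_setNbhd_deleteEdges_sdiff hbip hA ha b c
    have : (B \ {d}).ncard ≤ (N \ {d}).ncard :=
      Set.ncard_le_ncard (Set.sdiff_subset_sdiff_left hBN)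
    rw [Set.ncard_sdiff_singleton_of_mem hd] at this
    have := Set.ncard_le_ncard hS
    omega

/-- The component of `a` in `G - ab` would have even size (it is closed under a perfect matching
of `G - ab`) and odd size (removing `a`, it is closed under a perfect matching of `G` through
`ab`). -/
lemma deleteEdges_connected_of_isPerfectMatching [Finite V] (hconn : G.Connected)
    {a b : V} {M : G.Subgraph} (hM : M.IsPerfectMatching) (hab : s(a, b) ∈ M.edgeSet)
    {N : (G.deleteEdges {s(a, b)}).Subgraph} (hN : N.IsPerfectMatching) :
    (G.deleteEdges {s(a, b)}).Connected := by
  refine hconn.connected_delete_edge_of_not_isBridge (isBridge_iff.not_left.mpr ?_)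
  by_contra hab'
  set C := {x | (G.deleteEdges {s(a, b)}).Reachable x a}
  have hbC : b ∉ C := fun h => hab' h.symm
  have hpa : matchPartner hM a = b := matchPartner_eq_of_adj hM hab
  have hC : Even C.ncard := even_ncard_of_matchPartner_mem hN
    fun x hx => (adj_matchPartner hN x).symm.reachable.trans hx
  have hCa : Even (C \ {a}).ncard := by
    refine even_ncard_of_matchPartner_mem hM fun x ⟨hxC, hxa⟩ => ?_
    have hxb : x ≠ b := fun h => hbC (h ▸ hxC)
    have hadj : (G.deleteEdges {s(a, b)}).Adj x (matchPartner hM x) := by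
      refine (G.deleteEdges_adj).mpr ⟨adj_matchPartner hM x, fun h => ?_⟩
      rcases Sym2.eq_iff.mp h with ⟨h1, -⟩ | ⟨h1, -⟩
      exacts [hxa h1, hxb h1]
    refine ⟨hadj.symm.reachable.trans hxC, fun h => hxb ?_⟩
    rw [← hpa, ← Set.mem_singleton_iff.mp h, matchPartner_matchPartner]
  have haC : a ∈ C := Reachable.refl a
  rw [Set.ncard_sdiff_singleton_of_mem haC] at hCa
  have := (Set.ncard_pos (Set.toFinite C)).mpr ⟨a, haC⟩
  rw [Nat.even_iff] at hC hCa
  omega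

lemma IsBrace.deleteEdges_isMatchingCovered [Fintype V] (hbr : IsBrace G)
    (hbip : IsBipartition G A B) (hA : 3 ≤ A.ncard) {a b : V} (ha : a ∈ A) (hb : b ∈ B)
    (hab : G.Adj a b) : IsMatchingCovered (G.deleteEdges {s(a, b)}) := by
  obtain ⟨M, hM⟩ := hbr.2.1.exists_isPerfectMatching
  have hAB := hbip.ncard_eq_ncard hM
  have hbipJ := hbip.mono (G.deleteEdges_le {s(a, b)})
  have hmc : ∀ e ∈ (G.deleteEdges {s(a, b)}).edgeSet,
      ∃ N : (G.deleteEdges {s(a, b)}).Subgraph, N.IsPerfectMatching ∧ e ∈ N.edgeSet := by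
    rintro ⟨c, d⟩ hcd
    rcases hbip.mem_or_mem c with hc | hc
    · exact exists_isPerfectMatching_mem_edgeSet hbipJ hAB hcd hc
        (hbr.hall_deleteEdges hbip hA ha hc (hbipJ.mem_right_of_adj hc hcd))
    · have hswap : G.deleteEdges {s(a, b)} = G.deleteEdges {s(b, a)} := by rw [Sym2.eq_swap]
      rw [hswap] at hcd ⊢
      have hbipJ' := hbip.symm.mono (G.deleteEdges_le {s(b, a)})
      exact exists_isPerfectMatching_mem_edgeSet hbipJ' hAB.symm hcd hc
        (hbr.hall_deleteEdges hbip.symm (hAB ▸ hA) hb hc (hbipJ'.mem_right_of_adj hc hcd))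
  obtain ⟨y, hya, hyb⟩ : (G.neighborSet a \ {b}).Nonempty := by
    rw [← Set.ncard_pos, Set.ncard_sdiff_singleton_of_mem (show b ∈ G.neighborSet a from hab)]
    have := hbr.three_le_mdeg hbip hA a
    unfold mdeg at this
    omega
  have hy : (G.deleteEdges {s(a, b)}).Adj a y := (G.deleteEdges_adj).mpr
    ⟨hya, fun h => hyb (Sym2.congr_right.mp h)⟩
  obtain ⟨N, hN, -⟩ := hmc s(a, y) hy
  obtain ⟨M', hM', hM'ab⟩ := hbr.2.1.2.2 s(a, b) hab
  exact ⟨deleteEdges_connected_of_isPerfectMatching hbr.2.1.1 hM' hM'ab hN, ⟨s(a, y), hy⟩, hmc⟩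

end DeleteEdge

section TightPair

variable {V : Type*} {J J' : SimpleGraph V} {A B X SA SB : Set V}

/-- A nontrivial tight cut of a bipartite matching covered graph yields such a pair, with shore
`SA ∪ (B \ SB)`. -/
structure IsTightPair (J : SimpleGraph V) (A B SA SB : Set V) : Prop where
  subset_left : SA ⊆ A
  subset_right : SB ⊆ B
  ncard_add_ncard : SA.ncard + SB.ncard + 1 = A.ncard
  not_adj : ∀ x ∈ SA, ∀ y ∈ SB, ¬ J.Adj x y

lemma IsTightPair.mono (h : IsTightPair J A B SA SB) (hle : J' ≤ J) : IsTightPair J' A B SA SB :=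
  ⟨h.1, h.2, h.3, fun x hx y hy hxy => h.4 x hx y hy (hle hxy)⟩

lemma IsTightPair.setNbhd_left_subset (h : IsTightPair J A B SA SB) (hbip : IsBipartition J A B) :
    setNbhd J SA ⊆ B \ SB := by
  rintro y ⟨x, hx, hxy⟩
  exact ⟨hbip.mem_right_of_adj (h.1 hx) hxy, fun hy => h.4 x hx y hy hxy⟩

lemma IsTightPair.setNbhd_right_subset (h : IsTightPair J A B SA SB)
    (hbip : IsBipartition J A B) : setNbhd J SB ⊆ A \ SA := by
  rintro x ⟨y, hy, hyx⟩
  exact ⟨hbip.symm.mem_right_of_adj (h.2 hy) hyx, fun hx => h.4 x hx y hy hyx.symm⟩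

lemma IsTightPair.ncard_setNbhd_right_le [Finite V] (h : IsTightPair J A B SA SB)
    (hbip : IsBipartition J A B) : (setNbhd J SB).ncard ≤ SB.ncard + 1 := by
  have := Set.ncard_le_ncard (h.setNbhd_right_subset hbip)
  rw [Set.ncard_sdiff h.1] at this
  have := h.3
  omega

lemma IsTightPair.ncard_setNbhd_left_le [Finite V] (h : IsTightPair J A B SA SB)
    (hbip : IsBipartition J A B) (hAB : A.ncard = B.ncard) :
    (setNbhd J SA).ncard ≤ SA.ncard + 1 := by
  have := Set.ncard_le_ncard (h.setNbhd_left_subset hbip)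
  rw [Set.ncard_sdiff h.2] at this
  have := h.3
  omega

lemma IsTightCut.exists_crossing (ht : IsTightCut J X) {M : J.Subgraph}
    (hM : M.IsPerfectMatching) :
    ∃ u v, u ∈ X ∧ v ∉ X ∧ M.edgeSet ∩ cutEdges J X = {s(u, v)} := by
  obtain ⟨e, he⟩ := Set.ncard_eq_one.mp (ht M hM)
  obtain ⟨-, -, u, v, rfl, hu, hv⟩ := (he ▸ rfl : e ∈ M.edgeSet ∩ cutEdges J X)
  exact ⟨u, v, hu, hv, he⟩

/-- Away from its crossing edge `uv`, a perfect matching pairs `X ∩ A` with `X ∩ B`. -/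
lemma IsBipartition.ncard_inter_eq_succ [Finite V] (hbip : IsBipartition J A B) {M : J.Subgraph}
    (hM : M.IsPerfectMatching) {u v : V} (hu : u ∈ X) (hv : v ∉ X)
    (hcross : M.edgeSet ∩ cutEdges J X = {s(u, v)}) (huA : u ∈ A) :
    (X ∩ A).ncard = (X ∩ B).ncard + 1 := by
  set p := matchPartner hM with hp
  have hpu : p u = v :=
    matchPartner_eq_of_adj hM (hcross.symm ▸ rfl : s(u, v) ∈ M.edgeSet ∩ cutEdges J X).1
  have hclosed : ∀ x ∈ X, x ≠ u → p x ∈ X := by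
    intro x hx hxu
    by_contra hpx
    have : s(x, p x) ∈ M.edgeSet ∩ cutEdges J X :=
      ⟨matchPartner_adj hM x, adj_matchPartner hM x, x, p x, rfl, hx, hpx⟩
    rw [hcross, Set.mem_singleton_iff, Sym2.eq_iff] at this
    rcases this with ⟨h, -⟩ | ⟨h, -⟩
    exacts [hxu h, hv (h ▸ hx)]
  have himg : p '' ((X ∩ A) \ {u}) = X ∩ B := by
    refine Set.Subset.antisymm ?_ fun y ⟨hyX, hyB⟩ => ?_
    · rintro _ ⟨x, ⟨⟨hxX, hxA⟩, hxu⟩, rfl⟩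
      exact ⟨hclosed x hxX hxu, hbip.mem_right_of_adj hxA (adj_matchPartner hM x)⟩
    have hyu : y ≠ u := (hbip.ne_of_mem huA hyB).symm
    refine ⟨p y, ⟨⟨hclosed y hyX hyu, hbip.symm.mem_right_of_adj hyB (adj_matchPartner hM y)⟩,
      fun h => hv ?_⟩, matchPartner_matchPartner hM y⟩
    rwa [← hpu, ← Set.mem_singleton_iff.mp h, hp, matchPartner_matchPartner]
  have huXA : u ∈ X ∩ A := ⟨hu, huA⟩
  rw [← himg, (matchPartner_injective hM).injOn.ncard_image,
    Set.ncard_sdiff_singleton_of_mem huXA]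
  have := (Set.ncard_pos (Set.toFinite _)).mpr ⟨u, huXA⟩
  omega

/-- When `X` has one more vertex in `A` than in `B`, every perfect matching leaves `X` through
`A`, so no edge joins `X ∩ B` to `A \ X`. -/
lemma exists_isTightPair_of_ncard_inter [Finite V] (hbip : IsBipartition J A B)
    (hmc : IsMatchingCovered J) (ht : IsTightCut J X) (hnt : ¬ IsTrivialShore X)
    (hsz : (X ∩ A).ncard = (X ∩ B).ncard + 1) :
    ∃ SA SB, IsTightPair J A B SA SB ∧ SA.Nonempty ∧ SB.Nonempty := by
  have hA : (A \ X).ncard + (X ∩ A).ncard = A.ncard := by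
    rw [Set.inter_comm, add_comm, Set.ncard_inter_add_ncard_sdiff_eq_ncard]
  refine ⟨A \ X, X ∩ B, ⟨Set.sdiff_subset, Set.inter_subset_right, by omega, ?_⟩, ?_, ?_⟩
  · rintro x ⟨-, hxX⟩ y ⟨hyX, hyB⟩ hxy
    obtain ⟨M, hM, hyxM⟩ := hmc.2.2 s(y, x) hxy.symm
    obtain ⟨u, v, hu, hv, hcross⟩ := ht.exists_crossing hM
    have : s(y, x) ∈ M.edgeSet ∩ cutEdges J X := ⟨hyxM, hxy.symm, y, x, rfl, hyX, hxX⟩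
    rw [hcross, Set.mem_singleton_iff, Sym2.eq_iff] at this
    rcases this with ⟨rfl, rfl⟩ | ⟨rfl, -⟩
    · have := hbip.symm.ncard_inter_eq_succ hM hu hv hcross hyB
      omega
    · exact hv hyX
  · rw [Set.nonempty_iff_ne_empty]
    intro hAX
    obtain ⟨M, hM⟩ := hmc.exists_isPerfectMatching
    have hXc : Xᶜ = B \ (X ∩ B) := by
      ext z
      have := hbip.mem_or_mem z
      have : z ∈ A → z ∈ X := fun hz =>
        by_contra fun h => Set.eq_empty_iff_forall_notMem.mp hAX z ⟨hz, h⟩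
      simp only [Set.mem_compl_iff, Set.mem_sdiff, Set.mem_inter_iff]
      tauto
    have h1 : (Xᶜ).ncard = 1 := by
      rw [hXc, Set.ncard_sdiff Set.inter_subset_right, ← hbip.ncard_eq_ncard hM]
      rw [hAX, Set.ncard_empty] at hA
      omega
    exact hnt (Or.inr (Set.ncard_eq_one.mp h1))
  · rw [Set.nonempty_iff_ne_empty]
    intro hXB
    rw [hXB, Set.ncard_empty] at hsz
    obtain ⟨x, hx⟩ := Set.ncard_eq_one.mp hsz
    refine hnt (Or.inl ⟨x, ?_⟩)
    rw [← hx]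
    ext z
    refine ⟨fun hz => ⟨hz, (hbip.mem_or_mem z).resolve_right fun h => ?_⟩, fun hz => hz.1⟩
    exact Set.eq_empty_iff_forall_notMem.mp hXB z ⟨hz, h⟩

lemma exists_isTightPair_of_not_isBrace [Finite V] (hbip : IsBipartition J A B)
    (hmc : IsMatchingCovered J) (hnb : ¬ IsBrace J) :
    ∃ SA SB, IsTightPair J A B SA SB ∧ SA.Nonempty ∧ SB.Nonempty := by
  obtain ⟨X, ht, hnt⟩ : ∃ X, IsTightCut J X ∧ ¬ IsTrivialShore X := by
    by_contra! h
    exact hnb ⟨⟨A, B, hbip⟩, hmc, h⟩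
  obtain ⟨M, hM⟩ := hmc.exists_isPerfectMatching
  obtain ⟨u, v, hu, hv, hcross⟩ := ht.exists_crossing hM
  rcases hbip.mem_or_mem u with huA | huB
  · exact exists_isTightPair_of_ncard_inter hbip hmc ht hnt
      (hbip.ncard_inter_eq_succ hM hu hv hcross huA)
  · obtain ⟨SB, SA, ⟨hSB, hSA, hsize, hno⟩, hSBne, hSAne⟩ := exists_isTightPair_of_ncard_inter
      hbip.symm hmc ht hnt (hbip.symm.ncard_inter_eq_succ hM hu hv hcross huB)
    exact ⟨SA, SB, ⟨hSA, hSB, by rw [hbip.ncard_eq_ncard hM]; omega,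
      fun x hx y hy h => hno y hy x hx h.symm⟩, hSAne, hSBne⟩

end TightPair

/-- Minimality makes `G - ab` a non-brace; its tight pair must separate `a` from `b`, since
otherwise it would also be a tight pair of the brace `G`. -/
lemma IsMinimalBrace.exists_isTightPair_deleteEdges {V : Type*} [Fintype V] {G : SimpleGraph V}
    {A B : Set V} (hmin : IsMinimalBrace G) (hbip : IsBipartition G A B) (hA : 3 ≤ A.ncard)
    {a b : V} (ha : a ∈ A) (hb : b ∈ B) (hab : G.Adj a b) :
    ∃ SA SB, IsTightPair (G.deleteEdges {s(a, b)}) A B SA SB ∧ a ∈ SA ∧ b ∈ SB := by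
  obtain ⟨SA, SB, hpair, hSAne, hSBne⟩ := exists_isTightPair_of_not_isBrace
    (hbip.mono (G.deleteEdges_le _)) (hmin.1.deleteEdges_isMatchingCovered hbip hA ha hb hab)
    (hmin.2 s(a, b) hab)
  refine ⟨SA, SB, hpair, ?_⟩
  by_contra hab'
  have hpairG : IsTightPair G A B SA SB := by
    refine ⟨hpair.1, hpair.2, hpair.3, fun x hx y hy hxy => hpair.4 x hx y hy ?_⟩
    refine (G.deleteEdges_adj).mpr ⟨hxy, fun h => ?_⟩
    rcases Sym2.eq_iff.mp (Set.mem_singleton_iff.mp h) with ⟨rfl, rfl⟩ | ⟨rfl, -⟩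
    exacts [hab' ⟨hx, hy⟩, hbip.notMem_right (hpair.1 hx) hb]
  obtain ⟨M, hM⟩ := hmin.1.2.1.exists_isPerfectMatching
  have := hpair.3
  have := (Set.ncard_pos (Set.toFinite SA)).mpr hSAne
  have := hmin.1.ncard_setNbhd_ge_add_two hbip.symm hpair.2 hSBne
    (by rw [← hbip.ncard_eq_ncard hM]; omega)
  have := hpairG.ncard_setNbhd_right_le hbip
  omega

section Contraction

variable {V W : Type*} {G : SimpleGraph V} {H : SimpleGraph W} {fm : V → W} {T S : Set V}

structure IsContraction (G : SimpleGraph V) (H : SimpleGraph W) (fm : V → W) (T : Set V) :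
    Prop where
  surjective : Function.Surjective fm
  map_eq_map_iff : ∀ u v, fm u = fm v ↔ u = v ∨ (u ∈ T ∧ v ∈ T)
  adj_iff : ∀ x y, H.Adj x y ↔ x ≠ y ∧ ∃ u v, G.Adj u v ∧ fm u = x ∧ fm v = y

lemma IsRetractMap.isContraction (hR : IsRetractMap G H fm) {b₀ : V} (hb₀ : mdeg G b₀ = 2)
    (hidx : thinIndex G = 1) : IsContraction G H fm (insert b₀ (G.neighborSet b₀)) := by
  have huniq : ∀ z, mdeg G z = 2 → z = b₀ := fun z hz => by
    obtain ⟨x, hx⟩ := Set.ncard_eq_one.mp hidx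
    have h₁ : z ∈ {v | mdeg G v = 2} := hz
    have h₂ : b₀ ∈ {v | mdeg G v = 2} := hb₀
    rw [hx] at h₁ h₂
    exact h₁.trans h₂.symm
  refine ⟨hR.1, fun u v => (hR.2.1 u v).trans ⟨?_, ?_⟩, hR.2.2⟩
  · rintro (h | ⟨z, hz, hu, hv⟩)
    exacts [Or.inl h, Or.inr (huniq z hz ▸ ⟨hu, hv⟩)]
  · rintro (h | ⟨hu, hv⟩)
    exacts [Or.inl h, Or.inr ⟨b₀, hb₀, hu, hv⟩]

lemma IsContraction.eq_of_map_eq_map (hC : IsContraction G H fm T) {u v : V} (hv : v ∉ T)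
    (h : fm u = fm v) : u = v :=
  ((hC.map_eq_map_iff u v).mp h).resolve_right fun h' => hv h'.2

lemma IsContraction.injOn (hC : IsContraction G H fm T) (hS : Disjoint S T) : Set.InjOn fm S :=
  fun _ _ _ hv h => hC.eq_of_map_eq_map (hS.notMem_of_mem_left hv) h

lemma IsContraction.setNbhd_deleteEdges_image_subset (hC : IsContraction G H fm T)
    (hS : Disjoint S T) (g : Sym2 V) :
    setNbhd (H.deleteEdges {Sym2.map fm g}) (fm '' S) ⊆ fm '' setNbhd (G.deleteEdges {g}) S := by
  rintro y ⟨_, ⟨z, hz, rfl⟩, hzy⟩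
  obtain ⟨hH, hg⟩ := (H.deleteEdges_adj).mp hzy
  obtain ⟨-, u, v, huv, hu, rfl⟩ := (hC.adj_iff _ _).mp hH
  obtain rfl := hC.eq_of_map_eq_map (hS.notMem_of_mem_left hz) hu
  refine ⟨v, ⟨u, hz, (G.deleteEdges_adj).mpr ⟨huv, fun h => hg ?_⟩⟩, rfl⟩
  rw [Set.mem_singleton_iff] at h ⊢
  rw [← h, Sym2.map_mk]

lemma IsContraction.mdeg_map (hC : IsContraction G H fm T) (hsimple : RetractMapSimple G fm)
    {x : V} (hx : x ∉ T) : mdeg H (fm x) = mdeg G x := by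
  have hne : ∀ v, G.Adj x v → fm x ≠ fm v := fun v hxv h =>
    ((hC.map_eq_map_iff x v).mp h).elim hxv.ne fun h' => hx h'.1
  have himg : H.neighborSet (fm x) = fm '' G.neighborSet x := by
    ext y
    refine ⟨fun hy => ?_, ?_⟩
    · obtain ⟨-, u, v, huv, hu, rfl⟩ := (hC.adj_iff _ _).mp hy
      obtain rfl := hC.eq_of_map_eq_map hx hu
      exact ⟨v, huv, rfl⟩
    · rintro ⟨v, hv, rfl⟩
      exact (hC.adj_iff _ _).mpr ⟨hne v hv, x, v, hv, rfl, rfl⟩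
  have hinj : Set.InjOn fm (G.neighborSet x) := fun u hu v hv h =>
    Sym2.congr_right.mp (hsimple s(x, u) hu s(x, v) hv (by simp [h])
      (by simpa using hne u hu))
  unfold mdeg
  rw [himg, hinj.ncard_image]

section Bicontraction

variable {A B : Set V} {b₀ : V}

lemma IsContraction.isBipartition (hC : IsContraction G H fm (insert b₀ (G.neighborSet b₀)))
    (hbip : IsBipartition G A B) (hb₀ : b₀ ∈ B) (hne : (G.neighborSet b₀).Nonempty) :
    IsBipartition H (fm '' A) (fm '' (B \ {b₀})) := by
  have hTB : ∀ v ∈ insert b₀ (G.neighborSet b₀), v ∈ B → v = b₀ := by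
    rintro v (rfl | hv) hvB
    exacts [rfl, absurd hvB (hbip.notMem_right (hbip.symm.mem_right_of_adj hb₀ hv))]
  obtain ⟨v₀, hv₀⟩ := hne
  refine ⟨?_, ?_, fun x y hxy => ?_⟩
  · refine Set.eq_univ_of_forall fun x => ?_
    obtain ⟨u, rfl⟩ := hC.surjective x
    rcases hbip.mem_or_mem u with hu | hu
    · exact Or.inl ⟨u, hu, rfl⟩
    by_cases hub : u = b₀
    · refine Or.inl ⟨v₀, hbip.symm.mem_right_of_adj hb₀ hv₀, (hC.map_eq_map_iff _ _).mpr ?_⟩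
      exact Or.inr ⟨Or.inr hv₀, hub ▸ Set.mem_insert _ _⟩
    · exact Or.inr ⟨u, ⟨hu, hub⟩, rfl⟩
  · refine Set.eq_empty_of_forall_notMem ?_
    rintro _ ⟨⟨u, huA, rfl⟩, v, ⟨hvB, hvb₀⟩, hvu⟩
    rcases (hC.map_eq_map_iff v u).mp hvu with rfl | ⟨hvT, -⟩
    exacts [hbip.notMem_right huA hvB, hvb₀ (hTB v hvT hvB)]
  obtain ⟨hne, u, v, huv, rfl, rfl⟩ := (hC.adj_iff x y).mp hxy
  have key : ∀ u v, G.Adj u v → u ∈ A → fm u ≠ fm v →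
      fm u ∈ fm '' A ∧ fm v ∈ fm '' (B \ {b₀}) := fun u v huv hu hne =>
    ⟨⟨u, hu, rfl⟩, v, ⟨hbip.mem_right_of_adj hu huv, fun hvb => hne ((hC.map_eq_map_iff u v).mpr
      (Or.inr ⟨Or.inr (hvb ▸ huv.symm), hvb ▸ Set.mem_insert _ _⟩))⟩, rfl⟩
  rcases hbip.mem_or_mem u with hu | hu
  · exact Or.inl (key u v huv hu hne)
  · exact Or.inr (key v u huv.symm (hbip.symm.mem_right_of_adj hu huv) hne.symm).symm

lemma IsBipartition.disjoint_insert_neighborSet (hbip : IsBipartition G A B) (hb₀ : b₀ ∈ B)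
    (hS : S ⊆ B) (hb₀S : b₀ ∉ S) : Disjoint S (insert b₀ (G.neighborSet b₀)) := by
  refine Set.disjoint_left.mpr fun v hv hvT => ?_
  rcases hvT with rfl | hvN
  exacts [hb₀S hv, hbip.notMem_right (hbip.symm.mem_right_of_adj hb₀ hvN) (hS hv)]

lemma IsContraction.ncard_image_sdiff [Finite V]
    (hC : IsContraction G H fm (insert b₀ (G.neighborSet b₀))) (hbip : IsBipartition G A B)
    (hb₀ : b₀ ∈ B) : (fm '' (B \ {b₀})).ncard = B.ncard - 1 := by
  have hdisj := hbip.disjoint_insert_neighborSet hb₀ (Set.sdiff_subset (t := {b₀}))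
    fun h => h.2 rfl
  rw [(hC.injOn hdisj).ncard_image, Set.ncard_sdiff_singleton_of_mem hb₀]

end Bicontraction

variable [Finite W] {P Q : Set W} {g : Sym2 V}

lemma IsContraction.four_le_mdeg (hC : IsContraction G H fm T) (hsimple : RetractMapSimple G fm)
    (hbipH : IsBipartition H P Q) {x : V} {y : W} (hK : IsBrace (H.deleteEdges {s(fm x, y)}))
    (hx : x ∉ T) (hxQ : fm x ∈ Q) (hxy : H.Adj (fm x) y) (h3 : 3 ≤ mdeg G x) :
    4 ≤ mdeg G x := by
  by_contra! hlt
  have hdeg := hC.mdeg_map hsimple hx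
  obtain ⟨M, hM⟩ := hK.2.1.exists_isPerfectMatching
  have hbipK := hbipH.mono (H.deleteEdges_le {s(fm x, y)})
  have hPQ := hbipK.ncard_eq_ncard hM
  have hNP : H.neighborSet (fm x) ⊆ P := setNbhd_singleton (G := H) (fm x) ▸
    hbipH.symm.setNbhd_subset (Set.singleton_subset_iff.mpr hxQ)
  have := Set.ncard_le_ncard hNP
  have := hK.four_le_mdeg hbipK hxQ hxy (by unfold mdeg at hdeg h3 hlt; omega)
  omega

variable [Finite V]

/-- The surplus of the brace `H - fm(g)` lifts to sets of `G - g` avoiding the contracted set. -/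
lemma IsContraction.ncard_le_succ (hC : IsContraction G H fm T)
    (hK : IsBrace (H.deleteEdges {Sym2.map fm g}))
    (hbipK : IsBipartition (H.deleteEdges {Sym2.map fm g}) P Q) (hST : Disjoint S T)
    (hSP : fm '' S ⊆ P) (hne : S.Nonempty)
    (hN : (setNbhd (G.deleteEdges {g}) S).ncard ≤ S.ncard + 1) : P.ncard ≤ S.ncard + 1 := by
  have hcard := (hC.injOn hST).ncard_image
  by_contra! hsmall
  have := hK.ncard_setNbhd_ge_add_two hbipK hSP (hne.image fm) (by rw [hcard]; omega)
  rw [hcard] at this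
  have := (Set.ncard_le_ncard (hC.setNbhd_deleteEdges_image_subset hST g)).trans
    (Set.ncard_image_le (Set.toFinite _))
  omega

/-- A set `S` with few neighbours in `G - g` cannot see two contracted vertices: they would
merge, leaving `fm '' S` with too few neighbours in the matching covered graph `H - fm(g)`. -/
lemma IsContraction.eq_of_mem_of_setNbhd_subset (hC : IsContraction G H fm T)
    (hK : IsMatchingCovered (H.deleteEdges {Sym2.map fm g}))
    (hbipK : IsBipartition (H.deleteEdges {Sym2.map fm g}) P Q) (hST : Disjoint S T)
    (hSP : fm '' S ⊆ P) (hne : S.Nonempty) (hsmall : S.ncard < P.ncard) {R : Set V}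
    (hR : setNbhd (G.deleteEdges {g}) S ⊆ R) (hRcard : R.ncard ≤ S.ncard + 1) {u v : V}
    (hu : u ∈ R) (hv : v ∈ R) (huT : u ∈ T) (hvT : v ∈ T) : u = v := by
  by_contra huv
  have hcard := (hC.injOn hST).ncard_image
  have hcoll : (fm '' R).ncard < R.ncard :=
    lt_of_le_of_ne (Set.ncard_image_le (Set.toFinite _)) fun h => huv
      (Set.injOn_of_ncard_image_eq h (Set.toFinite _) hu hv
        ((hC.map_eq_map_iff u v).mpr (Or.inr ⟨huT, hvT⟩)))
  have := hK.ncard_setNbhd_ge_succ hbipK hSP (hne.image fm) (by rintro h; rw [← h] at hsmall; omega)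
  rw [hcard] at this
  have := Set.ncard_le_ncard ((hC.setNbhd_deleteEdges_image_subset hST g).trans (Set.image_mono hR))
  omega

end Contraction

section IndexOne

variable {V W : Type*} [Fintype V] {G : SimpleGraph V} {H : SimpleGraph W} {fm : V → W}
  {A B SA SB : Set V} {b₀ a b : V}

lemma IsTightPair.mdeg_le (hpair : IsTightPair (G.deleteEdges {s(a, b)}) A B SA SB)
    (hbip : IsBipartition G A B) (hAB : A.ncard = B.ncard) (ha : a ∈ SA) :
    mdeg G a ≤ SA.ncard + 2 := by
  have hsub := (hbip.setNbhd_subset_insert_deleteEdges (Set.singleton_subset_iff.mpr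
    (hpair.1 ha)) (hpair.1 ha) b).trans (Set.insert_subset_insert
      ((setNbhd_mono (Set.singleton_subset_iff.mpr ha)).trans
        (hpair.setNbhd_left_subset (hbip.mono (G.deleteEdges_le _)))))
  rw [setNbhd_singleton] at hsub
  have h₁ := Set.ncard_le_ncard hsub
  have h₂ := Set.ncard_insert_le b (B \ SB)
  rw [Set.ncard_sdiff hpair.2] at h₂
  have := hpair.3
  unfold mdeg
  omega

variable [Finite W]

lemma IsContraction.ncard_image_add_one (hC : IsContraction G H fm (insert b₀ (G.neighborSet b₀)))
    {g : Sym2 W} (hK : IsBrace (H.deleteEdges {g})) (hbip : IsBipartition G A B)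
    (hAB : A.ncard = B.ncard) (hb₀ : b₀ ∈ B) (hne : (G.neighborSet b₀).Nonempty) :
    (fm '' A).ncard + 1 = A.ncard ∧ (fm '' (B \ {b₀})).ncard + 1 = A.ncard := by
  obtain ⟨M, hM⟩ := hK.2.1.exists_isPerfectMatching
  have hP := ((hC.isBipartition hbip hb₀ hne).mono (H.deleteEdges_le {g})).ncard_eq_ncard hM
  have hQ := hC.ncard_image_sdiff hbip hb₀
  have := (Set.ncard_pos (Set.toFinite B)).mpr ⟨b₀, hb₀⟩
  omega

/-- Since `H - fm(ab)` is a brace, a side of the pair avoiding the contracted set nearly fills its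
colour class: for `SA` (were `b₀ ∈ SB`) this contradicts `b ≠ b₀`, and for `SB` it gives
`SA = {a}`. -/
lemma IsTightPair.eq_singleton_of_isContraction
    (hC : IsContraction G H fm (insert b₀ (G.neighborSet b₀)))
    (hK : IsBrace (H.deleteEdges {Sym2.map fm s(a, b)})) (hbip : IsBipartition G A B)
    (hAB : A.ncard = B.ncard) (hb₀ : b₀ ∈ B) (hne : (G.neighborSet b₀).Nonempty)
    (hpair : IsTightPair (G.deleteEdges {s(a, b)}) A B SA SB) (ha : a ∈ SA) (hb : b ∈ SB)
    (hbb₀ : b ≠ b₀) : SA = {a} ∧ b₀ ∉ SB := by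
  have hbipK := (hC.isBipartition hbip hb₀ hne).mono (H.deleteEdges_le {Sym2.map fm s(a, b)})
  have hsize := hC.ncard_image_add_one hK hbip hAB hb₀ hne
  have hbipJ := hbip.mono (G.deleteEdges_le {s(a, b)})
  have := hpair.3
  have hb₀SB : b₀ ∉ SB := by
    intro hb₀SB
    have hSAT : Disjoint SA (insert b₀ (G.neighborSet b₀)) := by
      refine Set.disjoint_left.mpr fun v hv hvT => ?_
      rcases hvT with rfl | hvN
      · exact hbip.notMem_right (hpair.1 hv) hb₀
      refine (hpair.setNbhd_right_subset hbipJ ⟨b₀, hb₀SB, (G.deleteEdges_adj).mpr ⟨hvN, ?_⟩⟩).2 hv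
      intro h
      rcases Sym2.eq_iff.mp (Set.mem_singleton_iff.mp h) with ⟨h₁, -⟩ | ⟨h₁, -⟩
      exacts [hbip.ne_of_mem (hpair.1 ha) hb₀ h₁.symm, hbb₀ h₁.symm]
    have := hC.ncard_le_succ hK hbipK hSAT (Set.image_mono hpair.1) ⟨a, ha⟩
      (hpair.ncard_setNbhd_left_le hbipJ hAB)
    exact hbb₀ ((Set.ncard_le_one (Set.toFinite _)).mp (by omega) b hb b₀ hb₀SB)
  have := hC.ncard_le_succ hK hbipK.symm
    (hbip.disjoint_insert_neighborSet hb₀ hpair.2 hb₀SB)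
    (Set.image_mono fun v hv => ⟨hpair.2 hv, fun h => hb₀SB (Set.mem_singleton_iff.mp h ▸ hv)⟩)
    ⟨b, hb⟩ (hpair.ncard_setNbhd_right_le hbipJ)
  exact ⟨Set.eq_singleton_iff_unique_mem.mpr
    ⟨ha, fun x hx => (Set.ncard_le_one (Set.toFinite _)).mp (by omega) x hx a ha⟩, hb₀SB⟩

lemma IsTightPair.eq_of_mem_neighborSet
    (hC : IsContraction G H fm (insert b₀ (G.neighborSet b₀)))
    (hK : IsBrace (H.deleteEdges {Sym2.map fm s(a, b)})) (hbip : IsBipartition G A B)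
    (hAB : A.ncard = B.ncard) (hb₀ : b₀ ∈ B)
    (hpair : IsTightPair (G.deleteEdges {s(a, b)}) A B SA SB) (ha : a ∈ SA) (hb : b ∈ SB)
    (hb₀SB : b₀ ∉ SB) {v₁ v₂ : V} (hv₁ : v₁ ∈ G.neighborSet b₀ \ SA)
    (hv₂ : v₂ ∈ G.neighborSet b₀ \ SA) : v₁ = v₂ := by
  have hbipK := (hC.isBipartition hbip hb₀ ⟨v₁, hv₁.1⟩).mono
    (H.deleteEdges_le {Sym2.map fm s(a, b)})
  have hsize := hC.ncard_image_add_one hK hbip hAB hb₀ ⟨v₁, hv₁.1⟩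
  have hbipJ := hbip.mono (G.deleteEdges_le {s(a, b)})
  have hA := Set.ncard_sdiff hpair.1
  have := hpair.3
  have := (Set.ncard_pos (Set.toFinite SA)).mpr ⟨a, ha⟩
  have hNA : G.neighborSet b₀ ⊆ A := fun v hv => hbip.symm.mem_right_of_adj hb₀ hv
  exact hC.eq_of_mem_of_setNbhd_subset hK.2.1 hbipK.symm
    (hbip.disjoint_insert_neighborSet hb₀ hpair.2 hb₀SB)
    (Set.image_mono fun v hv => ⟨hpair.2 hv, fun h => hb₀SB (Set.mem_singleton_iff.mp h ▸ hv)⟩)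
    ⟨b, hb⟩ (by omega) (hpair.setNbhd_right_subset hbipJ) (by omega)
    ⟨hNA hv₁.1, hv₁.2⟩ ⟨hNA hv₂.1, hv₂.2⟩ (Or.inr hv₁.1) (Or.inr hv₂.1)

end IndexOne

lemma exists_outer_cubic_end_of_mem_right {V W : Type*} [Fintype V] [Finite W]
    {G : SimpleGraph V} {H : SimpleGraph W} {fm : V → W} {A B : Set V} {b₀ w v₁ v₂ : V}
    (hmin : IsMinimalBrace G) (hbip : IsBipartition G A B) (hb₀B : b₀ ∈ B) (hb₀ : mdeg G b₀ = 3)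
    (hb₀w : G.Adj b₀ w)
    (hC : IsContraction (G.deleteEdges {s(b₀, w)}) H fm
      (insert b₀ ((G.deleteEdges {s(b₀, w)}).neighborSet b₀)))
    (hsimple : RetractMapSimple (G.deleteEdges {s(b₀, w)}) fm)
    (hN : (G.deleteEdges {s(b₀, w)}).neighborSet b₀ = {v₁, v₂}) (hv₁₂ : v₁ ≠ v₂)
    {f' : Sym2 V} (hf' : f' ∈ (G.deleteEdges {s(b₀, w)}).edgeSet)
    (hf : IsSuperfluous H (Sym2.map fm f')) :
    ∃ u v : V, f' = s(u, v) ∧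
      IsOuterVertex (G.deleteEdges {s(b₀, w)}) v ∧ mdeg G v = 3 ∧ 4 ≤ mdeg G u := by
  set G' := G.deleteEdges {s(b₀, w)}
  have hbip' : IsBipartition G' A B := hbip.mono (G.deleteEdges_le _)
  have hv₁ : v₁ ∈ G'.neighborSet b₀ := hN ▸ Set.mem_insert _ _
  have hv₂ : v₂ ∈ G'.neighborSet b₀ := hN ▸ Set.mem_insert_of_mem _ rfl
  have hA3 : 3 ≤ A.ncard :=
    hb₀ ▸ Set.ncard_le_ncard fun v hv => hbip.symm.mem_right_of_adj hb₀B hv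
  obtain ⟨M, hM⟩ := hmin.1.2.1.exists_isPerfectMatching
  have hAB := hbip.ncard_eq_ncard hM
  obtain ⟨a, b, rfl, ha, hb⟩ := hbip'.exists_eq_mk hf'
  have hab : G'.Adj a b := hf'
  have hbb₀ : b ≠ b₀ := by
    rintro rfl
    exact hf.1.ne ((hC.map_eq_map_iff a b).mpr (Or.inr ⟨Or.inr hab.symm, Set.mem_insert _ _⟩))
  obtain ⟨SA, SB, hpair, haSA, hbSB⟩ :=
    hmin.exists_isTightPair_deleteEdges hbip hA3 ha hb ((G.deleteEdges_adj).mp hab).1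
  have hpair' := hpair.mono (deleteEdges_mono (G.deleteEdges_le {s(b₀, w)}))
  obtain ⟨rfl, hb₀SB⟩ :=
    hpair'.eq_singleton_of_isContraction hC hf.2 hbip' hAB hb₀B ⟨v₁, hv₁⟩ haSA hbSB hbb₀
  have haN : a ∈ G'.neighborSet b₀ := by
    by_contra haN
    refine hv₁₂ (hpair'.eq_of_mem_neighborSet hC hf.2 hbip' hAB hb₀B haSA hbSB hb₀SB ⟨hv₁, ?_⟩
      ⟨hv₂, ?_⟩) <;> rintro rfl <;> contradiction
  have hdeg : mdeg G' b₀ = 2 := show (G'.neighborSet b₀).ncard = 2 from hN ▸ Set.ncard_pair hv₁₂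
  refine ⟨b, a, Sym2.eq_swap, ⟨b₀, hdeg, haN⟩,
    le_antisymm (by simpa using hpair.mdeg_le hbip hAB haSA) (hmin.1.three_le_mdeg hbip hA3 a), ?_⟩
  have hdegb : mdeg G' b = mdeg G b :=
    mdeg_deleteEdges_of_ne hbb₀ (hbip.ne_of_mem (hbip.symm.mem_right_of_adj hb₀B hb₀w) hb).symm
  rw [← hdegb]
  refine hC.four_le_mdeg hsimple (hC.isBipartition hbip' hb₀B ⟨v₁, hv₁⟩)
    (Sym2.eq_swap ▸ hf.2) (fun h => h.elim hbb₀ fun hN => hbip.notMem_right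
      (hbip'.symm.mem_right_of_adj hb₀B hN) hb) ⟨b, ⟨hb, hbb₀⟩, rfl⟩ hf.1.symm
    (hdegb ▸ hmin.1.three_le_mdeg hbip hA3 b)

theorem statement13_general {V W : Type*} [Fintype V] (G : SimpleGraph V)
    (H : SimpleGraph W) (fm : V → W) (b₀ w : V)
    (hmin : IsMinimalBrace G)
    (hthin : IsStrictlyThinVia G s(b₀, w) H fm)
    (hb₀ : mdeg G b₀ = 3)
    (hidx : thinIndex (G.deleteEdges {s(b₀, w)}) = 1)
    (f : Sym2 W) (hf : IsSuperfluous H f)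
    (f' : Sym2 V) (hf' : f' ∈ (G.deleteEdges {s(b₀, w)}).edgeSet)
    (hmap : Sym2.map fm f' = f) :
    ∃ u v : V, f' = s(u, v) ∧
      IsOuterVertex (G.deleteEdges {s(b₀, w)}) v ∧ mdeg G v = 3 ∧ 4 ≤ mdeg G u := by
  subst hmap
  obtain ⟨hb₀w, hR, -, hsimple⟩ := hthin
  have : Finite W := Finite.of_surjective fm hR.1
  have hdeg : mdeg (G.deleteEdges {s(b₀, w)}) b₀ = 2 := by
    have := mdeg_deleteEdges_mk (show G.Adj b₀ w from hb₀w)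
    omega
  obtain ⟨v₁, v₂, hv₁₂, hN⟩ := Set.ncard_eq_two.mp hdeg
  have hC := hR.isContraction hdeg hidx
  obtain ⟨A, B, hbip⟩ := hmin.1.1
  rcases hbip.mem_or_mem b₀ with hb₀A | hb₀B
  · exact exists_outer_cubic_end_of_mem_right hmin hbip.symm hb₀A hb₀ hb₀w hC hsimple hN hv₁₂ hf' hf
  · exact exists_outer_cubic_end_of_mem_right hmin hbip hb₀B hb₀ hb₀w hC hsimple hN hv₁₂ hf' hf

/-- Let `G ∉ 𝒢` be a minimal brace, `e = b₀w` a strictly thin edge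
of index one with cubic end `b₀`, and suppose the simple brace `H = Ĝ−e` is not
minimal. Then for every superfluous edge `f` of `H` (viewed in `G − e` as the edge
`f'`), `G − e` has a cubic outer vertex that is an end of `f`, and the other end of
`f` is noncubic. -/
theorem statement13 {V W : Type*} [Fintype V] (G : SimpleGraph V)
    (H : SimpleGraph W) (fm : V → W) (b₀ w : V)
    (hmin : IsMinimalBrace G) (hnotG : ¬ InMcCuaigFamily G)
    (hthin : IsStrictlyThinVia G s(b₀, w) H fm)
    (hb₀ : mdeg G b₀ = 3)
    (hidx : thinIndex (G.deleteEdges {s(b₀, w)}) = 1)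
    (hHnotmin : ¬ IsMinimalBrace H)
    (f : Sym2 W) (hf : IsSuperfluous H f)
    (f' : Sym2 V) (hf' : f' ∈ (G.deleteEdges {s(b₀, w)}).edgeSet)
    (hmap : Sym2.map fm f' = f) :
    ∃ u v : V, f' = s(u, v) ∧
      IsOuterVertex (G.deleteEdges {s(b₀, w)}) v ∧ mdeg G v = 3 ∧ 4 ≤ mdeg G u :=
  statement13_general G H fm b₀ w hmin hthin hb₀ hidx f hf f' hf' hmap

end MinimalBraces
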